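/- arXiv:1704.03438 — 2 statements merged into one kernel-verified Lean document; each statement's English description precedes it below -/
import Mathlib

section
/- Let X be a topological space, (M,d) a metric space with d bounded by 1, let I be an index set with a filter l on I, let (g_i)_{i∈I} be a family of continuous functions from X to M, and let f : X → M. Then (g_i) converges to f pointwise along l (that is, for every x ∈ X, g_i(x) → f(x) along l) if and only if (ǧ_i) converges to f̌ pointwise along l (that is, for every (x,α) ∈ X × 𝒦, ǧ_i(x,α) → f̌(x,α) along l). -/
open Filter Topology Set

/-- For a metric space `M` (with metric bounded by `1`), `𝒦` is the set of all functions
`α : M → [-1,1]` satisfying `|α m₁ - α m₂| ≤ d(m₁, m₂)`, regarded as a subspace of `ℝ^M` with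
the pointwise convergence topology. -/
abbrev Kspace (M : Type*) [MetricSpace M] : Type _ :=
  {α : M → ℝ // (∀ m, α m ∈ Set.Icc (-1 : ℝ) 1) ∧
    ∀ m₁ m₂ : M, |α m₁ - α m₂| ≤ dist m₁ m₂}

/-- For `f : X → M`, the associated function `f̌ : X × 𝒦 → ℝ`, `f̌(x, α) = α (f x)`. -/
def check {X : Type*} {M : Type*} [MetricSpace M] (f : X → M) : X × Kspace M → ℝ :=
  fun p => p.2.1 (f p.1)

/-!
Every `α ∈ 𝒦` is `1`-Lipschitz, hence continuous, so `gᵢ x → f x` gives `α (gᵢ x) → α (f x)`.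
Conversely, since `d ≤ 1` the function `d(·, f x)` belongs to `𝒦`, and its convergence along
`gᵢ x` says exactly that `d(gᵢ x, f x) → 0`.
-/

namespace Kspace

variable {M : Type*} [MetricSpace M]

theorem lipschitzWith_one (α : Kspace M) : LipschitzWith 1 α.1 :=
  LipschitzWith.of_dist_le_mul fun m₁ m₂ => by simpa [Real.dist_eq] using α.2.2 m₁ m₂

def distTo (hd : ∀ m₁ m₂ : M, dist m₁ m₂ ≤ 1) (y : M) : Kspace M :=
  ⟨fun m => dist m y,
    fun m => ⟨(neg_nonpos.2 zero_le_one).trans dist_nonneg, hd m y⟩,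
    fun m₁ m₂ => abs_dist_sub_le m₁ m₂ y⟩

theorem tendsto_iff_forall_tendsto_apply (hd : ∀ m₁ m₂ : M, dist m₁ m₂ ≤ 1) {I : Type*}
    {l : Filter I} {u : I → M} {y : M} :
    Tendsto u l (𝓝 y) ↔ ∀ α : Kspace M, Tendsto (fun i => α.1 (u i)) l (𝓝 (α.1 y)) := by
  refine ⟨fun h α => (α.lipschitzWith_one.continuous.tendsto y).comp h, fun h => ?_⟩
  rw [tendsto_iff_dist_tendsto_zero]
  simpa [distTo] using h (distTo hd y)

end Kspace

theorem tendsto_pointwise_iff_tendsto_check_general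
    {X M I : Type*} [MetricSpace M]
    (hd : ∀ m₁ m₂ : M, dist m₁ m₂ ≤ 1) (l : Filter I)
    (g : I → X → M) (f : X → M) :
    (∀ x : X, Tendsto (fun i => g i x) l (𝓝 (f x))) ↔
      (∀ p : X × Kspace M, Tendsto (fun i => check (g i) p) l (𝓝 (check f p))) := by
  rw [Prod.forall]
  exact forall_congr' fun x => Kspace.tendsto_iff_forall_tendsto_apply hd

/-- A family `(gᵢ)` of continuous functions `X → M` converges pointwise along a filter `l` to
`f : X → M` iff `(ǧᵢ)` converges pointwise along `l` to `f̌`. -/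
theorem tendsto_pointwise_iff_tendsto_check
    {X M I : Type*} [TopologicalSpace X] [MetricSpace M]
    (hd : ∀ m₁ m₂ : M, dist m₁ m₂ ≤ 1) (l : Filter I)
    (g : I → X → M) (hg : ∀ i, Continuous (g i)) (f : X → M) :
    (∀ x : X, Tendsto (fun i => g i x) l (𝓝 (f x))) ↔
      (∀ p : X × Kspace M, Tendsto (fun i => check (g i) p) l (𝓝 (check f p))) :=
  tendsto_pointwise_iff_tendsto_check_general hd l g f
end

section
/- Let X be a compact space, (M,d) a metric space, and let G be a countable subset of C(X,M) such that the closure of G in M^X is compact. If the closure of G in M^X has cardinality at least 2^𝔠 (where 𝔠 is the cardinality of the continuum), then G contains a sequence whose closure in M^X is homeomorphic to βω. -/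
/-!
Enumerate `G` as `g n` and pick a countable `D ⊆ M` whose closure contains all values of members
of the closure of `G`. The maps `f ↦ min (dist (f ·) d) 1`, `d ∈ D`, embed the closure of `G` into
a countable product of closures of the sequences `u_d n = min (dist (g n ·) d) 1`.

For a uniformly bounded sequence `u` of real functions there is a dichotomy (Rosenthal,
Bourgain–Fremlin–Talagrand). Give the domain the second countable topology induced by the `u n`.
If some `F` in the closure of `u` oscillates on a nonempty set `P`, i.e. `{F < r}` and `{s < F}`
are both dense in `P` for some `r < s`, then `F` lies in the closure of every tail of `u`, and a
subsequence is chosen inductively on which every finite pattern of values `< r` and `> s` is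
realized. Otherwise every `F` in the closure is fragmented, and a fragmented function is
determined up to `ε` by countable data: a transfinite derivation that removes the basic open sets
on which `F` varies by at most `ε` ranks these sets, and it suffices to record the order between
the ranks and one value of `F` on each piece. So the closure has at most `𝔠` elements.

If all closures of the `u_d` are that small, so is the closure of `G`, which contradicts
`2 ^ 𝔠 ≤ #(closure G)`. Otherwise, by compactness of `X`, some `u_d` has a subsequence realizing
every pattern on pairs of disjoint infinite sets; then disjoint sets of terms of the corresponding
subsequence of `g` have disjoint closures, so its closure is a copy of `βℕ`.
-/

open Filter Topology Set

open Cardinal Function TopologicalSpace OrdinalApprox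

lemma Cardinal.mk_pi_le_continuum {ι : Type*} [Countable ι] {β : ι → Type*}
    (h : ∀ i, #(β i) ≤ 𝔠) : #(∀ i, β i) ≤ 𝔠 := by
  rw [mk_pi]
  calc prod (fun i => #(β i)) ≤ prod (fun _ : ι => 𝔠) := prod_le_prod _ _ h
    _ = 𝔠 ^ lift #ι := by rw [prod_const, lift_continuum]
    _ ≤ 𝔠 ^ ℵ₀ := power_le_power_left continuum_ne_zero (by simp)
    _ = 𝔠 := continuum_power_aleph0

namespace Rosenthal

variable {T : Type*}

def OscLE (f : T → ℝ) (ε : ℝ) (S : Set T) : Prop :=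
  ∀ y ∈ S, ∀ y' ∈ S, |f y - f y'| ≤ ε

lemma OscLE.mono {f : T → ℝ} {ε : ℝ} {S S' : Set T} (h : OscLE f ε S) (hS : S' ⊆ S) :
    OscLE f ε S' :=
  fun y hy y' hy' => h y (hS hy) y' (hS hy')

section Fragmented

variable {ι : Type*} (b : ι → Set T) (f : T → ℝ) (ε : ℝ)

def fragDeriv : Set T →o Set T where
  toFun P := P \ ⋃ (i) (_ : OscLE f ε (b i ∩ P)), b i
  monotone' P P' hP y := by
    simp only [Set.mem_sdiff, mem_iUnion, not_exists]
    exact fun ⟨hy, hnot⟩ => ⟨hP hy, fun i hi => hnot i (hi.mono (inter_subset_inter_right _ hP))⟩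

noncomputable def fragRank (i : ι) : Ordinal :=
  sInf {a | OscLE f ε (b i ∩ gfpApprox (fragDeriv b f ε) ⊤ a)}

def disjointedBy (r : ι → ι → Prop) (i : ι) : Set T := b i \ ⋃ (k) (_ : r k i), b k

variable {b f ε}

lemma mem_gfpApprox_top_iff {D : Set T →o Set T} {a : Ordinal} {y : T} :
    y ∈ gfpApprox D ⊤ a ↔ ∀ c < a, y ∈ D (gfpApprox D ⊤ c) := by
  rw [gfpApprox]
  simp

lemma exists_fragRank_lt_of_notMem_gfpApprox {a : Ordinal} {y : T}
    (hy : y ∉ gfpApprox (fragDeriv b f ε) ⊤ a) : ∃ k, fragRank b f ε k < a ∧ y ∈ b k := by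
  induction a using WellFoundedLT.induction generalizing y with
  | _ a ih =>
    obtain ⟨c, hca, hyc⟩ := not_forall₂.1 (mt mem_gfpApprox_top_iff.2 hy)
    by_cases hy' : y ∈ gfpApprox (fragDeriv b f ε) ⊤ c
    · have : y ∈ ⋃ (i) (_ : OscLE f ε (b i ∩ gfpApprox (fragDeriv b f ε) ⊤ c)), b i := by
        by_contra h
        exact hyc ⟨hy', h⟩
      obtain ⟨k, hk, hyk⟩ := mem_iUnion₂.1 this
      exact ⟨k, (csInf_le' hk).trans_lt hca, hyk⟩
    · obtain ⟨k, hk, hyk⟩ := ih c hca hy'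
      exact ⟨k, hk.trans hca, hyk⟩

lemma exists_cover_disjointedBy (hgfp : (fragDeriv b f ε).gfp = ∅) :
    ∃ r : ι → ι → Prop,
      (∀ i, OscLE f ε (disjointedBy b r i)) ∧ ∀ y, ∃ i, y ∈ disjointedBy b r i := by
  -- A point outside a stage of the derivation lies in a basic set of smaller rank, so the piece
  -- of `b i` lies in the stage indexed by the rank of `i`, where `f` is `ε`-small on `b i`.
  obtain ⟨a₀, ha₀⟩ := gfp_mem_range_gfpApprox (fragDeriv b f ε)
  rw [hgfp] at ha₀
  have hrank : ∀ i, OscLE f ε (b i ∩ gfpApprox (fragDeriv b f ε) ⊤ (fragRank b f ε i)) :=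
    fun i => csInf_mem (s := {a | OscLE f ε (b i ∩ gfpApprox (fragDeriv b f ε) ⊤ a)})
      ⟨a₀, fun y hy => by rw [ha₀] at hy; exact hy.2.elim⟩
  refine ⟨fun k i => fragRank b f ε k < fragRank b f ε i, fun i => (hrank i).mono ?_,
    fun y => ?_⟩
  · rintro y ⟨hyi, hy⟩
    refine ⟨hyi, by_contra fun h => ?_⟩
    obtain ⟨k, hk, hyk⟩ := exists_fragRank_lt_of_notMem_gfpApprox h
    exact hy (mem_biUnion hk hyk)
  · obtain ⟨k, -, hyk⟩ := exists_fragRank_lt_of_notMem_gfpApprox (a := a₀) (y := y)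
      (by rw [ha₀]; exact notMem_empty y)
    obtain ⟨i, hyi, hmin⟩ :=
      (InvImage.wf (fragRank b f ε) wellFounded_lt).has_min {k | y ∈ b k} ⟨k, hyk⟩
    refine ⟨i, hyi, ?_⟩
    simp only [mem_iUnion, not_exists]
    exact fun k hk hyk => hmin k hyk hk

variable [TopologicalSpace T]

def Fragmented (f : T → ℝ) : Prop :=
  ∀ ε > 0, ∀ P : Set T, IsClosed P → P.Nonempty →
    ∃ U, IsOpen U ∧ (U ∩ P).Nonempty ∧ OscLE f ε (U ∩ P)

lemma closure_subset_fragDeriv (hb : ∀ i, IsOpen (b i)) {P : Set T}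
    (hP : P ⊆ fragDeriv b f ε P) : closure P ⊆ fragDeriv b f ε (closure P) := by
  refine fun y hy => ⟨hy, ?_⟩
  simp only [mem_iUnion, not_exists]
  intro i hi hyi
  obtain ⟨z, hzi, hzP⟩ := mem_closure_iff.1 hy _ (hb i) hyi
  exact (hP hzP).2 (mem_biUnion (hi.mono (inter_subset_inter_right _ subset_closure)) hzi)

lemma gfp_fragDeriv_eq_empty (hb : IsTopologicalBasis (range b)) (hf : Fragmented f)
    (hε : 0 < ε) : (fragDeriv b f ε).gfp = ∅ := by
  set P := (fragDeriv b f ε).gfp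
  have hPfix : fragDeriv b f ε P = P := (fragDeriv b f ε).map_gfp
  have hP : IsClosed P := closure_subset_iff_isClosed.1 <| (fragDeriv b f ε).le_gfp <|
    closure_subset_fragDeriv (fun i => hb.isOpen (mem_range_self i)) hPfix.ge
  by_contra hne
  obtain ⟨U, hU, ⟨y, hyU, hyP⟩, hosc⟩ := hf ε hε P hP (nonempty_iff_ne_empty.2 hne)
  obtain ⟨_, ⟨i, rfl⟩, hyi, hiU⟩ := hb.exists_subset_of_mem_open hyU hU
  rw [← hPfix] at hyP
  exact hyP.2 (mem_biUnion (hosc.mono (inter_subset_inter_left _ hiU)) hyi)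

lemma Fragmented.exists_approx_on_disjointedBy (hb : IsTopologicalBasis (range b))
    (hf : Fragmented f) (hε : 0 < ε) :
    ∃ (r : ι → ι → Prop) (c : ι → ℝ),
      (∀ y, ∃ i, y ∈ disjointedBy b r i) ∧ ∀ i, ∀ y ∈ disjointedBy b r i, |f y - c i| ≤ ε := by
  classical
  obtain ⟨r, hosc, hcover⟩ := exists_cover_disjointedBy (gfp_fragDeriv_eq_empty hb hf hε)
  refine ⟨r, fun i => if h : (disjointedBy b r i).Nonempty then f h.some else 0, hcover,
    fun i y hy => ?_⟩
  dsimp only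
  rw [dif_pos ⟨y, hy⟩]
  exact hosc i y hy _ (Nonempty.some_mem _)

theorem card_fragmented_le_continuum [SecondCountableTopology T] :
    #{f : T → ℝ // Fragmented f} ≤ 𝔠 := by
  have hb : IsTopologicalBasis (range ((↑) : countableBasis T → Set T)) := by
    simpa using isBasis_countableBasis T
  have := (countable_countableBasis T).to_subtype
  -- the code of `f` at scale `1 / (m + 1)`: the order between ranks and a value on each piece
  choose r c hcover hc using fun (f : {f : T → ℝ // Fragmented f}) (m : ℕ) =>
    f.2.exists_approx_on_disjointedBy hb (Nat.one_div_pos_of_nat (n := m))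
  have hinj : Injective fun f m => (r f m, c f m) := by
    intro f f' h
    ext y
    refine eq_of_forall_dist_le fun δ hδ => ?_
    obtain ⟨m, hm⟩ := exists_nat_one_div_lt (half_pos hδ)
    obtain ⟨i, hi⟩ := hcover f m y
    have hr : r f m = r f' m := congrArg Prod.fst (congrFun h m)
    have hc' : c f m = c f' m := congrArg Prod.snd (congrFun h m)
    have h₁ := hc f m i y hi
    have h₂ := hc f' m i y (hr ▸ hi)
    rw [← hc'] at h₂
    calc dist (f.1 y) (f'.1 y) ≤ dist (f.1 y) (c f m i) + dist (f'.1 y) (c f m i) :=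
          dist_triangle_right ..
      _ ≤ δ := by rw [Real.dist_eq, Real.dist_eq]; linarith
  refine (mk_le_of_injective hinj).trans (mk_pi_le_continuum fun _ => ?_)
  rw [mk_prod, lift_id, lift_id, ← continuum_mul_self]
  gcongr
  · exact mk_pi_le_continuum fun _ =>
      mk_pi_le_continuum fun _ => by simpa using (nat_lt_continuum 2).le
  · exact mk_pi_le_continuum fun _ => mk_real.le

end Fragmented

def IsIndependent (u : ℕ → T → ℝ) (r s : ℝ) : Prop :=
  ∀ I J : Finset ℕ, Disjoint I J → ∃ y, (∀ k ∈ I, u k y < r) ∧ ∀ k ∈ J, s < u k y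

def patternSet (u : ℕ → T → ℝ) (r s : ℝ) (S J : Finset ℕ) : Set T :=
  {y | (∀ j ∈ S \ J, u j y < r) ∧ ∀ j ∈ J, s < u j y}

def IsIndependentOn (u : ℕ → T → ℝ) (r s : ℝ) (P : Set T) (S : Finset ℕ) : Prop :=
  ∀ J ⊆ S, (P ∩ patternSet u r s S J).Nonempty

section Patterns

variable {u : ℕ → T → ℝ} {r s : ℝ} {P : Set T}

lemma mem_patternSet_insert {S J : Finset ℕ} {n : ℕ} (hn : n ∉ S) {y : T}
    (hy : y ∈ patternSet u r s S (J.erase n)) (hyn : if n ∈ J then s < u n y else u n y < r) :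
    y ∈ patternSet u r s (insert n S) J := by
  refine ⟨fun j hj => ?_, fun j hj => ?_⟩
  · obtain ⟨hj, hjJ⟩ := Finset.mem_sdiff.1 hj
    rcases Finset.mem_insert.1 hj with rfl | hjS
    · simpa [hjJ] using hyn
    · exact hy.1 j (Finset.mem_sdiff.2 ⟨hjS, fun h => hjJ (Finset.mem_of_mem_erase h)⟩)
  · by_cases hjn : j = n
    · subst hjn
      simpa [hj] using hyn
    · exact hy.2 j (Finset.mem_erase.2 ⟨hjn, hj⟩)

lemma isIndependentOn_empty (hP : P.Nonempty) : IsIndependentOn u r s P ∅ := by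
  intro J hJ
  obtain ⟨y, hy⟩ := hP
  exact ⟨y, hy, by simp, by simp [Finset.subset_empty.1 hJ]⟩

end Patterns

section Oscillation

variable [TopologicalSpace T]

def OscillatesOn (f : T → ℝ) (r s : ℝ) (P : Set T) : Prop :=
  P ⊆ closure {y ∈ P | f y < r} ∧ P ⊆ closure {y ∈ P | s < f y}

lemma exists_isOpen_subset_forall_not {V P : Set T} (hV : IsOpen V) {p : T → Prop}
    (h : ¬ closure (V ∩ P) ⊆ closure {y ∈ closure (V ∩ P) | p y}) :
    ∃ W, IsOpen W ∧ W ⊆ V ∧ (W ∩ P).Nonempty ∧ ∀ y ∈ W ∩ P, ¬ p y := by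
  obtain ⟨z, hz, hz'⟩ := not_subset.1 h
  obtain ⟨y, hy, hyV, hyP⟩ := mem_closure_iff.1 hz _ isClosed_closure.isOpen_compl hz'
  refine ⟨V ∩ (closure {y ∈ closure (V ∩ P) | p y})ᶜ, hV.inter isClosed_closure.isOpen_compl,
    inter_subset_left, ⟨y, ⟨hyV, hy⟩, hyP⟩, fun x ⟨⟨hxV, hx⟩, hxP⟩ hpx => hx ?_⟩
  exact subset_closure ⟨subset_closure ⟨hxV, hxP⟩, hpx⟩

theorem fragmented_of_forall_not_oscillatesOn {f : T → ℝ} {C : ℝ} (hC : ∀ y, |f y| ≤ C)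
    (h : ∀ r s, r < s → ∀ P, IsClosed P → P.Nonempty → ¬ OscillatesOn f r s P) :
    Fragmented f := by
  -- `t` is the infimum of the upper bounds of `f` on relatively open pieces of `P`. On a piece
  -- where `f < t + ε / 2`, non-oscillation across `(t - ε / 2, t - ε / 4)` gives a smaller piece
  -- on which either `t - ε / 2 ≤ f`, or `f ≤ t - ε / 4`, contradicting the choice of `t`.
  intro ε hε P hP hPne
  set A := {u | ∃ V, IsOpen V ∧ (V ∩ P).Nonempty ∧ ∀ y ∈ V ∩ P, f y ≤ u}
  have hA : A.Nonempty :=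
    ⟨C, univ, isOpen_univ, by rwa [univ_inter], fun y _ => (abs_le.1 (hC y)).2⟩
  have hAbdd : BddBelow A :=
    ⟨-C, fun u ⟨_, _, ⟨y, hy⟩, hu⟩ => (abs_le.1 (hC y)).1.trans (hu y hy)⟩
  set t := sInf A
  obtain ⟨u, ⟨V, hV, hVP, hVu⟩, hut⟩ :=
    exists_lt_of_csInf_lt hA (lt_add_of_pos_right t (half_pos hε))
  have hosc := h (t - ε / 2) (t - ε / 4) (by linarith) _ isClosed_closure (hVP.mono subset_closure)
  rw [OscillatesOn, not_and_or] at hosc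
  rcases hosc with hlow | hhigh
  · obtain ⟨W, hW, hWV, hWP, hWf⟩ := exists_isOpen_subset_forall_not hV hlow
    refine ⟨W, hW, hWP, fun y hy y' hy' => abs_le.2 ⟨?_, ?_⟩⟩ <;>
    linarith [not_lt.1 (hWf y hy), not_lt.1 (hWf y' hy'), hVu y ⟨hWV hy.1, hy.2⟩,
      hVu y' ⟨hWV hy'.1, hy'.2⟩]
  · obtain ⟨W, hW, -, hWP, hWf⟩ := exists_isOpen_subset_forall_not hV hhigh
    have : t ≤ t - ε / 4 := csInf_le hAbdd ⟨W, hW, hWP, fun y hy => not_lt.1 (hWf y hy)⟩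
    linarith

lemma _root_.Continuous.not_oscillatesOn {f : T → ℝ} (hf : Continuous f) {r s : ℝ} (hrs : r ≤ s)
    {P : Set T} (hP : P.Nonempty) : ¬ OscillatesOn f r s P := by
  rintro ⟨hlow, hhigh⟩
  obtain ⟨y, hyP, hy⟩ := closure_nonempty_iff.1 ⟨_, hlow hP.some_mem⟩
  obtain ⟨z, hz, -, hz'⟩ := mem_closure_iff.1 (hhigh hyP) _ (isOpen_lt hf continuous_const) hy
  exact (hz.trans_le hrs).not_gt hz'

variable {u : ℕ → T → ℝ} {r s : ℝ} {P : Set T}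

lemma isOpen_patternSet (hu : ∀ n, Continuous (u n)) (S J : Finset ℕ) :
    IsOpen (patternSet u r s S J) := by
  simp only [patternSet, ofPred_and, ofPred_forall]
  exact (isOpen_biInter_finset fun j _ => isOpen_lt (hu j) continuous_const).inter
    (isOpen_biInter_finset fun j _ => isOpen_lt continuous_const (hu j))

lemma mem_closure_image_Ioi_of_oscillatesOn (hu : ∀ n, Continuous (u n)) {F : T → ℝ}
    (hF : F ∈ closure (range u)) (hrs : r ≤ s) (hP : P.Nonempty) (hosc : OscillatesOn F r s P)
    (N : ℕ) : F ∈ closure (u '' Ioi N) := by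
  rw [← image_univ, ← Iic_union_Ioi (a := N), image_union, closure_union,
    ((finite_Iic N).image u).isClosed.closure_eq] at hF
  refine hF.resolve_left ?_
  rintro ⟨n, -, rfl⟩
  exact (hu n).not_oscillatesOn hrs hP hosc

lemma IsIndependentOn.exists_insert (hu : ∀ n, Continuous (u n)) {F : T → ℝ}
    (hosc : OscillatesOn F r s P) {S : Finset ℕ} (hS : IsIndependentOn u r s P S) {N : ℕ}
    (hSN : ∀ j ∈ S, j ≤ N) (hF : F ∈ closure (u '' Ioi N)) :
    ∃ n, N < n ∧ IsIndependentOn u r s P (insert n S) := by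
  -- Each pattern on `S` is realized at points `q` and `q'` of `P` with `F q < r < s < F q'`;
  -- a late `u n` close enough to `F` at these finitely many points extends every pattern.
  classical
  have hpts : ∀ J ∈ S.powerset, ∃ q ∈ P ∩ patternSet u r s S J, ∃ q' ∈ P ∩ patternSet u r s S J,
      F q < r ∧ s < F q' := by
    intro J hJ
    obtain ⟨p, hpP, hp⟩ := hS J (Finset.mem_powerset.1 hJ)
    obtain ⟨q, hq, hqP, hFq⟩ := mem_closure_iff.1 (hosc.1 hpP) _ (isOpen_patternSet hu S J) hp
    obtain ⟨q', hq', hq'P, hFq'⟩ := mem_closure_iff.1 (hosc.2 hpP) _ (isOpen_patternSet hu S J) hp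
    exact ⟨q, ⟨hqP, hq⟩, q', ⟨hq'P, hq'⟩, hFq, hFq'⟩
  have : Nonempty T := let ⟨y, _⟩ := hS ∅ (Finset.empty_subset _); ⟨y⟩
  choose! q hq q' hq' hFq hFq' using hpts
  have hW : IsOpen (⋂ J ∈ S.powerset, {h : T → ℝ | h (q J) < r ∧ s < h (q' J)}) :=
    isOpen_biInter_finset fun J _ =>
      (isOpen_lt (continuous_apply _) continuous_const).inter
        (isOpen_lt continuous_const (continuous_apply _))
  obtain ⟨_, hnW, n, hNn, rfl⟩ :=
    mem_closure_iff.1 hF _ hW (mem_iInter₂.2 fun J hJ => ⟨hFq J hJ, hFq' J hJ⟩)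
  have hnS : n ∉ S := fun h => (hSN n h).not_gt hNn
  refine ⟨n, hNn, fun J hJ => ?_⟩
  have hJ₀ : J.erase n ∈ S.powerset := Finset.mem_powerset.2 fun j hj =>
    (Finset.mem_insert.1 (hJ (Finset.mem_of_mem_erase hj))).resolve_left
      (Finset.ne_of_mem_erase hj)
  have hn := mem_iInter₂.1 hnW _ hJ₀
  by_cases hnJ : n ∈ J
  · exact ⟨q' _, (hq' _ hJ₀).1, mem_patternSet_insert hnS (hq' _ hJ₀).2 (by simpa [hnJ] using hn.2)⟩
  · exact ⟨q _, (hq _ hJ₀).1, mem_patternSet_insert hnS (hq _ hJ₀).2 (by simpa [hnJ] using hn.1)⟩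

theorem exists_strictMono_isIndependent (hu : ∀ n, Continuous (u n)) {F : T → ℝ}
    (hF : F ∈ closure (range u)) (hrs : r ≤ s) (hP : P.Nonempty) (hosc : OscillatesOn F r s P) :
    ∃ n : ℕ → ℕ, StrictMono n ∧ IsIndependent (u ∘ n) r s := by
  classical
  have step : ∀ S : Finset ℕ, ∃ n, (∀ j ∈ S, j < n) ∧
      (IsIndependentOn u r s P S → IsIndependentOn u r s P (insert n S)) := by
    intro S
    have hle : ∀ j ∈ S, j ≤ S.sup id := fun j hj => Finset.le_sup (f := id) hj
    by_cases hS : IsIndependentOn u r s P S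
    · obtain ⟨n, hn, hind⟩ := hS.exists_insert hu hosc hle
        (mem_closure_image_Ioi_of_oscillatesOn hu hF hrs hP hosc _)
      exact ⟨n, fun j hj => (hle j hj).trans_lt hn, fun _ => hind⟩
    · exact ⟨S.sup id + 1, fun j hj => Nat.lt_succ_of_le (hle j hj), (absurd · hS)⟩
  choose next hnext hind using step
  let S : ℕ → Finset ℕ := fun k => Nat.rec ∅ (fun _ S => insert (next S) S) k
  have hSind : ∀ k, IsIndependentOn u r s P (S k) :=
    fun k => Nat.rec (isIndependentOn_empty hP) (fun _ ih => hind _ ih) k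
  have hmono : StrictMono (next ∘ S) :=
    strictMono_nat_of_lt_succ fun k => hnext _ _ (Finset.mem_insert_self _ _)
  have hSrange : ∀ k, S k = (Finset.range k).image (next ∘ S) := by
    intro k
    induction k with
    | zero => rfl
    | succ k ih =>
      rw [Finset.range_add_one, Finset.image_insert, ← ih]
      rfl
  refine ⟨next ∘ S, hmono, fun I J hIJ => ?_⟩
  obtain ⟨K, hK⟩ := Finset.exists_nat_subset_range (I ∪ J)
  obtain ⟨y, -, hyI, hyJ⟩ := hSind K (J.image (next ∘ S))
    (hSrange K ▸ Finset.image_subset_image (Finset.union_subset_right hK))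
  refine ⟨y, fun k hk => hyI _ (Finset.mem_sdiff.2 ⟨?_, ?_⟩),
    fun k hk => hyJ _ (Finset.mem_image_of_mem _ hk)⟩
  · rw [hSrange]
    exact Finset.mem_image_of_mem _ (Finset.union_subset_left hK hk)
  · rw [hmono.injective.mem_finset_image]
    exact Finset.disjoint_left.1 hIJ hk

theorem IsIndependent.exists_of_compactSpace [CompactSpace T] (hu : ∀ n, Continuous (u n))
    (h : IsIndependent u r s) {I J : Set ℕ} (hIJ : Disjoint I J) :
    ∃ y, (∀ k ∈ I, u k y ≤ r) ∧ ∀ k ∈ J, s ≤ u k y := by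
  classical
  let C : ℕ → Set T := fun k => {y | k ∈ I → u k y ≤ r} ∩ {y | k ∈ J → s ≤ u k y}
  have hC : ∀ k, IsClosed (C k) := fun k => by
    refine IsClosed.inter ?_ ?_
    · by_cases hI : k ∈ I
      · simpa [hI] using isClosed_le (hu k) continuous_const
      · simp [hI]
    · by_cases hJ : k ∈ J
      · simpa [hJ] using isClosed_le continuous_const (hu k)
      · simp [hJ]
  obtain ⟨y, hy⟩ := CompactSpace.iInter_nonempty hC fun S => by
    obtain ⟨y, hyI, hyJ⟩ := h (S.filter (· ∈ I)) (S.filter (· ∈ J))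
      (Finset.disjoint_filter.2 fun _ _ hk => Set.disjoint_left.1 hIJ hk)
    refine ⟨y, mem_iInter₂.2 fun k hk => ⟨fun hkI => ?_, fun hkJ => ?_⟩⟩
    · exact (hyI k (Finset.mem_filter.2 ⟨hk, hkI⟩)).le
    · exact (hyJ k (Finset.mem_filter.2 ⟨hk, hkJ⟩)).le
  exact ⟨y, fun k hk => (mem_iInter.1 hy k).1 hk, fun k hk => (mem_iInter.1 hy k).2 hk⟩

end Oscillation

theorem card_closure_range_le_continuum_or_exists_isIndependent (u : ℕ → T → ℝ) {C : ℝ}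
    (hC : ∀ n y, |u n y| ≤ C) :
    #(closure (range u)) ≤ 𝔠 ∨
      ∃ r s, r < s ∧ ∃ n : ℕ → ℕ, StrictMono n ∧ IsIndependent (u ∘ n) r s := by
  let _ : TopologicalSpace T := .induced (fun y n => u n y) inferInstance
  have := secondCountableTopology_induced T (ℕ → ℝ) fun y n => u n y
  have hu : ∀ n, Continuous (u n) := fun n =>
    (continuous_apply n).comp (continuous_induced_dom (f := fun y n => u n y))
  by_cases hfrag : ∀ F ∈ closure (range u), Fragmented F
  · refine .inl <| (mk_le_of_injective (f := fun F : closure (range u) =>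
      (⟨F.1, hfrag F.1 F.2⟩ : {f : T → ℝ // Fragmented f}))
      fun _ _ h => Subtype.ext (congrArg Subtype.val h :)).trans card_fragmented_le_continuum
  obtain ⟨F, hF, hnot⟩ := not_forall₂.1 hfrag
  have hFC : ∀ y, |F y| ≤ C := by
    refine closure_minimal (t := {h : T → ℝ | ∀ y, |h y| ≤ C}) ?_ ?_ hF
    · rintro _ ⟨n, rfl⟩
      exact hC n
    · simp only [ofPred_forall]
      exact isClosed_iInter fun y => isClosed_le (continuous_apply y).abs continuous_const
  by_contra hno
  exact hnot <| fragmented_of_forall_not_oscillatesOn hFC fun r s hrs P _ hP hosc =>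
    hno (.inr ⟨r, s, hrs, exists_strictMono_isIndependent hu hF hrs.le hP hosc⟩)

end Rosenthal

theorem nonempty_homeomorph_stoneCech_of_disjoint_closure {Z : Type*} [TopologicalSpace Z]
    [T2Space Z] {g : ℕ → Z} (hg : IsCompact (closure (range g)))
    (h : ∀ A B : Set ℕ, Disjoint A B → Disjoint (closure (g '' A)) (closure (g '' B))) :
    Nonempty (closure (range g) ≃ₜ StoneCech ℕ) := by
  have := isCompact_iff_compactSpace.1 hg
  let g' : ℕ → closure (range g) := fun k => ⟨g k, subset_closure (mem_range_self k)⟩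
  have hg' : Continuous g' := continuous_of_discreteTopology
  set Φ := stoneCechExtend hg'
  have hΦ : Continuous Φ := continuous_stoneCechExtend hg'
  have hΦg : Φ ∘ stoneCechUnit = g' := stoneCechExtend_extends hg'
  have hsurj : Surjective Φ := by
    have hdense : DenseRange g' := Topology.IsInducing.subtypeVal.dense_iff.2 fun x => by
      rw [← range_comp]
      exact x.2
    refine range_eq_univ.1 (eq_univ_of_univ_subset ?_)
    rw [← hdense.closure_range, ← hΦg, range_comp]
    exact (isCompact_range hΦ).isClosed.closure_subset_iff.2 (image_subset_range _ _)
  have hinj : Injective Φ := by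
    intro a b hab
    by_contra hne
    obtain ⟨U, V, hU, hV, haU, hbV, hUV⟩ := t2_separation hne
    have key : ∀ W, IsOpen W → ∀ c ∈ W, (Φ c : Z) ∈ closure (g '' (stoneCechUnit ⁻¹' W)) := by
      intro W hW c hc
      have hc' : c ∈ closure (stoneCechUnit '' (stoneCechUnit ⁻¹' W)) := by
        rw [image_preimage_eq_inter_range]
        exact denseRange_stoneCechUnit.open_subset_closure_inter hW hc
      have := mem_closure_image (continuous_subtype_val.comp hΦ).continuousAt hc'
      rwa [← image_comp, comp_assoc, hΦg] at this
    exact disjoint_left.1 (h _ _ (hUV.preimage _)) (key U hU a haU) (hab ▸ key V hV b hbV)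
  exact ⟨(hΦ.homeoOfEquivCompactToT2 (f := Equiv.ofBijective Φ ⟨hinj, hsurj⟩)).symm⟩

lemma disjoint_closure_image_of_le_of_le {Z : Type*} [TopologicalSpace Z] {g : ℕ → Z}
    {ψ : Z → ℝ} (hψ : Continuous ψ) {r s : ℝ} (hrs : r < s) {A B : Set ℕ}
    (hA : ∀ k ∈ A, ψ (g k) ≤ r) (hB : ∀ k ∈ B, s ≤ ψ (g k)) :
    Disjoint (closure (g '' A)) (closure (g '' B)) := by
  refine disjoint_of_subset (closure_minimal ?_ (isClosed_le hψ continuous_const))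
    (closure_minimal ?_ (isClosed_le continuous_const hψ))
    (disjoint_left.2 fun z h₁ h₂ => (h₁.trans_lt hrs).not_ge h₂)
  · rintro _ ⟨k, hk, rfl⟩
    exact hA k hk
  · rintro _ ⟨k, hk, rfl⟩
    exact hB k hk

lemma eq_of_forall_min_dist_eq {M : Type*} [MetricSpace M] {D : Set M} {z z' : M}
    (hz' : z' ∈ closure D) (h : ∀ d ∈ D, min (dist z d) 1 = min (dist z' d) 1) : z = z' := by
  refine eq_of_forall_dist_le fun ε hε => ?_
  obtain ⟨d, hd, hz'd⟩ := Metric.mem_closure_iff.1 hz' (min (ε / 2) 1) (by positivity)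
  have h1 : dist z' d < 1 := hz'd.trans_le (min_le_right _ _)
  have h2 := h d hd
  rw [min_eq_left h1.le] at h2
  have h3 : dist z d = dist z' d := by
    rcases le_total (dist z d) 1 with h | h
    · rwa [min_eq_left h] at h2
    · rw [min_eq_right h] at h2
      linarith
  calc dist z z' ≤ dist z d + dist z' d := dist_triangle_right _ _ _
    _ ≤ ε := by linarith [min_le_left (ε / 2) 1]

lemma exists_countable_forall_apply_mem_closure {X M : Type*} [TopologicalSpace X]
    [CompactSpace X] [PseudoMetricSpace M] (g : ℕ → X → M) (hg : ∀ n, Continuous (g n)) :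
    ∃ D : Set M, D.Countable ∧ ∀ f ∈ closure (range g), ∀ x, f x ∈ closure D := by
  obtain ⟨D, hDc, hD⟩ :=
    IsSeparable.iUnion fun n => (isCompact_range (hg n)).isSeparable
  refine ⟨D, hDc, fun f hf x => ?_⟩
  rw [← closure_closure (s := D)]
  exact map_mem_closure (f := fun h : X → M => h x) (continuous_apply x) hf fun _ ⟨n, hn⟩ =>
    hD (mem_iUnion.2 ⟨n, hn ▸ mem_range_self x⟩)

theorem card_closure_range_le_continuum_of_min_dist {X M : Type*} [MetricSpace M]
    (g : ℕ → X → M) {D : Set M} (hDc : D.Countable)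
    (hD : ∀ f ∈ closure (range g), ∀ x, f x ∈ closure D)
    (h : ∀ d ∈ D, #(closure (range fun n x => min (dist (g n x) d) 1)) ≤ 𝔠) :
    #(closure (range g)) ≤ 𝔠 := by
  have := hDc.to_subtype
  have hmaps : ∀ f ∈ closure (range g), ∀ d : D,
      (fun x => min (dist (f x) d) 1) ∈ closure (range fun n x => min (dist (g n x) d) 1) := by
    intro f hf d
    have hc : Continuous fun f : X → M => fun x => min (dist (f x) d) 1 :=
      continuous_pi fun x => ((continuous_apply x).dist continuous_const).min continuous_const
    exact map_mem_closure hc hf fun _ ⟨n, hn⟩ => ⟨n, hn ▸ rfl⟩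
  refine (mk_le_of_injective (f := fun f : closure (range g) => fun d : D =>
    (⟨_, hmaps f.1 f.2 d⟩ : closure (range fun n x => min (dist (g n x) d) 1))) ?_).trans
    (mk_pi_le_continuum fun d => h d d.2)
  intro f f' hff
  ext x
  exact eq_of_forall_min_dist_eq (hD _ f'.2 x) fun d hd =>
    congrFun (congrArg Subtype.val (congrFun hff ⟨d, hd⟩)) x


/-- Let `X` be a compact space, `(M, d)` a metric space and `G` a countable subset of `C(X, M)`
such that the closure of `G` in `M^X` is compact.  If the closure of `G` in `M^X` has
cardinality at least `2^𝔠`, then `G` contains a sequence whose closure in `M^X` is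
homeomorphic to `βω`. -/
theorem large_closure_contains_betaOmega_sequence
    {X M : Type*} [TopologicalSpace X] [CompactSpace X] [MetricSpace M]
    (G : Set (X → M)) (hGcount : G.Countable) (hGcont : ∀ g ∈ G, Continuous g)
    (hGcomp : IsCompact (closure G))
    (hcard : 2 ^ Cardinal.continuum ≤ Cardinal.mk ↥(closure G)) :
    ∃ g : ℕ → X → M, (∀ n, g n ∈ G) ∧
      Nonempty (↥(closure (Set.range g)) ≃ₜ StoneCech ℕ) := by
  have hG : G.Nonempty := closure_nonempty_iff.1 <| nonempty_coe_sort.1 <| mk_ne_zero_iff.1 <|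
    fun h => power_ne_zero _ two_ne_zero (nonpos_iff_eq_zero.1 (h ▸ hcard))
  obtain ⟨g, rfl⟩ := hGcount.exists_eq_range hG
  have hg : ∀ n, Continuous (g n) := fun n => hGcont _ (mem_range_self n)
  obtain ⟨D, hDc, hD⟩ := exists_countable_forall_apply_mem_closure g hg
  -- truncating the distance makes the families uniformly bounded
  let u : M → ℕ → X → ℝ := fun d n x => min (dist (g n x) d) 1
  by_cases hsmall : ∀ d ∈ D, #(closure (range (u d))) ≤ 𝔠
  · exact absurd (hcard.trans (card_closure_range_le_continuum_of_min_dist g hDc hD hsmall))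
      (cantor 𝔠).not_ge
  obtain ⟨d, -, hd⟩ := not_forall₂.1 hsmall
  have hu : ∀ n x, |u d n x| ≤ 1 := fun n x => by
    rw [abs_of_nonneg (le_min dist_nonneg zero_le_one)]
    exact min_le_right _ _
  obtain ⟨r, s, hrs, n, -, hind⟩ :=
    (Rosenthal.card_closure_range_le_continuum_or_exists_isIndependent (u d) hu).resolve_left hd
  refine ⟨g ∘ n, fun k => mem_range_self _, nonempty_homeomorph_stoneCech_of_disjoint_closure
    (hGcomp.of_isClosed_subset isClosed_closure (closure_mono (range_comp_subset_range _ _)))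
    fun A B hAB => ?_⟩
  obtain ⟨x, hxA, hxB⟩ := hind.exists_of_compactSpace
    (fun k => ((hg (n k)).dist continuous_const).min continuous_const) hAB
  exact disjoint_closure_image_of_le_of_le
    (((continuous_apply x).dist continuous_const).min continuous_const) hrs hxA hxB
end
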